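/- Let X be a locally compact topological space, let U ⊆ X be an open set whose complement has empty interior, and let (U_j) be a sequence of open subsets of X converging to U in the sense of Carathéodory. Then the sequence of open sets int(X ∖ U_j) converges to the empty set in the sense of Carathéodory; equivalently, for every nonempty open V ⊆ X there are only finitely many indices j with V ⊆ int(X ∖ U_j). -/

import Mathlib

/-- A sequence of open sets `U j` converges to an open set `L` in the sense of
Carathéodory iff (1) every compact `K ⊆ L` is eventually contained in the `U j`,
and (2) every open set contained in `U j` for infinitely many `j` is contained
in `L`. -/
def CaratheodoryConv {X : Type*} [TopologicalSpace X] (U : ℕ → Set X) (L : Set X) :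
    Prop :=
  (∀ K : Set X, IsCompact K → K ⊆ L → ∃ N : ℕ, ∀ n ≥ N, K ⊆ U n) ∧
  (∀ V : Set X, IsOpen V → {j : ℕ | V ⊆ U j}.Infinite → V ⊆ L)

/-!
A nonempty open `V` meets the dense open limit `U`, so it contains a compact neighbourhood `K`
of a point of `U`. By Carathéodory convergence `K ⊆ U j` for all large `j`, hence `V` can lie in
the complement of `U j` only for finitely many `j`.
-/

section

open Set

variable {X : Type*} [TopologicalSpace X]

theorem caratheodoryConv_empty_iff {U : ℕ → Set X} :
    CaratheodoryConv U ∅ ↔ ∀ V : Set X, IsOpen V → V.Nonempty → {j : ℕ | V ⊆ U j}.Finite := by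
  refine ⟨fun h V hV hne => ?_, fun h => ⟨?_, fun V hV hinf => ?_⟩⟩
  · by_contra hinf
    exact hne.ne_empty (subset_empty_iff.mp (h.2 V hV hinf))
  · intro K _ hK
    exact ⟨0, fun n _ => hK.trans (empty_subset _)⟩
  · rcases V.eq_empty_or_nonempty with rfl | hne
    · exact Subset.rfl
    · exact absurd (h V hV hne) hinf

theorem CaratheodoryConv.finite_setOf_disjoint [LocallyCompactSpace X] {U : ℕ → Set X}
    {L V : Set X} (h : CaratheodoryConv U L) (hL : IsOpen L) (hV : IsOpen V)
    (hVL : (V ∩ L).Nonempty) : {j : ℕ | Disjoint V (U j)}.Finite := by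
  obtain ⟨x, hx⟩ := hVL
  obtain ⟨K, hK, hxK, hKVL⟩ := exists_compact_subset (hV.inter hL) hx
  obtain ⟨N, hN⟩ := h.1 K hK (hKVL.trans inter_subset_right)
  have hxK : x ∈ K := interior_subset hxK
  refine (finite_lt_nat N).subset fun j hj => ?_
  by_contra hjN
  exact disjoint_left.mp hj (hKVL hxK).1 (hN j (not_lt.mp hjN) hxK)

end

theorem caratheodory_complements_to_empty
    {X : Type*} [TopologicalSpace X] [LocallyCompactSpace X]
    (U : Set X) (hU : IsOpen U) (hUc : interior (Uᶜ) = ∅)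
    (Useq : ℕ → Set X)
    (hconv : CaratheodoryConv Useq U) :
    CaratheodoryConv (fun j => interior ((Useq j)ᶜ)) ∅ ∧
    ∀ V : Set X, IsOpen V → V.Nonempty →
      {j : ℕ | V ⊆ interior ((Useq j)ᶜ)}.Finite := by
  have hdense : Dense U := by simpa using interior_eq_empty_iff_dense_compl.mp hUc
  have hfinite : ∀ V : Set X, IsOpen V → V.Nonempty →
      {j : ℕ | V ⊆ interior ((Useq j)ᶜ)}.Finite := fun V hV hne =>
    (hconv.finite_setOf_disjoint hU hV (hdense.inter_open_nonempty V hV hne)).subset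
      fun _ hj => Set.subset_compl_iff_disjoint_right.mp (hj.trans interior_subset)
  exact ⟨caratheodoryConv_empty_iff.mpr hfinite, hfinite⟩
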